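/- For every d ≥ 1, k with 0 ≤ k ≤ d−1, and j with 0 ≤ j ≤ d, we have c_{d,k}(j) ≤ c_{d,k+1}(j). -/

import Mathlib

/-!
With the rising factorial `a^(d) = a (a + 1) ⋯ (a + d - 1)`, put
`T_{d,k}(a) = ∑_{i ≤ k} C(k,i) (a - i)^(d)`, so that `d! P_{d,k}(n) = T_{d,k}(n + 1)`.
Pascal's rule gives `T_{d,k+1}(a) = T_{d,k}(a) + T_{d,k}(a - 1)`, hence
`c_{d,k+1}(j) - c_{d,k}(j)` is the `j`-th coefficient of `T_{d,k}(X)`, and it suffices that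
`T_{d,k}(X)` has nonnegative coefficients for `k < d`. By induction on `d` this follows from
`T_{d+1,k+1} = (X + d - k - 1) T_{d,k+1} + (k + 1) T_{d,k}`, whose first coefficient is
nonnegative off the diagonal `k + 1 = d`. On the diagonal, `(a - 1)^(d+1) = a^(d+1) - (d + 1) a^(d)`
turns it into `T_{m+3,m+2} = 2X T_{m+2,m+1} + (m + 2)(m + 1) T_{m+1,m}`.
-/

/-- The integer polynomial `d!·P_{d,k}` in the variable `n`, whose coefficients are the
numbers `c_{d,k}(j)`. -/
noncomputable def Qpoly (d k : ℕ) : Polynomial ℤ :=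
  ∑ i ∈ Finset.range (k + 1), Polynomial.C (k.choose i : ℤ) *
    ∏ m ∈ Finset.range d, (Polynomial.X + Polynomial.C ((m : ℤ) + 1 - (i : ℤ)))

open Polynomial Finset

namespace Polynomial

section NonnegCoeffs

variable (R : Type*) [Semiring R] [PartialOrder R] [IsOrderedRing R]

def nonnegCoeffs : Subsemiring R[X] where
  carrier := {p | ∀ n, 0 ≤ p.coeff n}
  mul_mem' hp hq n := by
    rw [coeff_mul]
    exact sum_nonneg fun x _ => mul_nonneg (hp _) (hq _)
  one_mem' n := by
    rw [coeff_one]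
    split_ifs <;> simp
  add_mem' hp hq n := by
    rw [coeff_add]
    exact add_nonneg (hp n) (hq n)
  zero_mem' n := by simp

variable {R}

theorem mem_nonnegCoeffs {p : R[X]} : p ∈ nonnegCoeffs R ↔ ∀ n, 0 ≤ p.coeff n := Iff.rfl

theorem X_mem_nonnegCoeffs : (X : R[X]) ∈ nonnegCoeffs R := mem_nonnegCoeffs.mpr fun n => by
  rw [coeff_X]
  split_ifs <;> simp

end NonnegCoeffs

variable {R : Type*} [CommRing R]

theorem ascPochhammer_eval_eq_prod_range (d : ℕ) (a : R) :
    (ascPochhammer R d).eval a = ∏ m ∈ range d, (a + m) := by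
  induction d with
  | zero => simp
  | succ d ih => rw [ascPochhammer_succ_eval, ih, prod_range_succ]

theorem ascPochhammer_succ_eval_left (d : ℕ) (a : R) :
    (ascPochhammer R (d + 1)).eval a = a * (ascPochhammer R d).eval (a + 1) := by
  rw [ascPochhammer_succ_left, eval_mul, eval_X, eval_comp, eval_add, eval_X, eval_one]

theorem ascPochhammer_eval_sub_one (d : ℕ) (a : R) :
    (ascPochhammer R (d + 1)).eval (a - 1) =
      (ascPochhammer R (d + 1)).eval a - (d + 1) * (ascPochhammer R d).eval a := by
  rw [ascPochhammer_succ_eval_left, sub_add_cancel, ascPochhammer_succ_eval]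
  ring

end Polynomial

section PochhammerBinomSum

variable {R : Type*} [CommRing R]

noncomputable def pochhammerBinomSum (d k : ℕ) (a : R) : R :=
  ∑ i ∈ range (k + 1), (k.choose i : R) * (ascPochhammer R d).eval (a - i)

theorem pochhammerBinomSum_zero_right (d : ℕ) (a : R) :
    pochhammerBinomSum d 0 a = (ascPochhammer R d).eval a := by
  simp [pochhammerBinomSum]

theorem pochhammerBinomSum_pascal (d k : ℕ) (a : R) :
    pochhammerBinomSum d (k + 1) a =
      pochhammerBinomSum d k a + pochhammerBinomSum d k (a - 1) := by
  unfold pochhammerBinomSum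
  rw [sum_choose_succ_mul (fun i _ => (ascPochhammer R d).eval (a - i)) k]
  congr 1
  refine sum_congr rfl fun i _ => ?_
  rw [Nat.cast_succ, sub_sub, add_comm (1 : R)]

theorem pochhammerBinomSum_sub_one (d k : ℕ) (a : R) :
    pochhammerBinomSum (d + 1) k (a - 1) =
      pochhammerBinomSum (d + 1) k a - (d + 1) * pochhammerBinomSum d k a := by
  simp only [pochhammerBinomSum, mul_sum, ← sum_sub_distrib, sub_right_comm a 1,
    ascPochhammer_eval_sub_one]
  refine sum_congr rfl fun i _ => by ring

theorem pochhammerBinomSum_succ_succ (d k : ℕ) (a : R) :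
    pochhammerBinomSum (d + 1) (k + 1) a =
      (a + d - (k + 1)) * pochhammerBinomSum d (k + 1) a + (k + 1) * pochhammerBinomSum d k a := by
  have hk : pochhammerBinomSum d k a =
      ∑ i ∈ range (k + 2), (k.choose i : R) * (ascPochhammer R d).eval (a - i) := by
    rw [pochhammerBinomSum, sum_range_succ _ (k + 1), Nat.choose_succ_self, Nat.cast_zero,
      zero_mul, add_zero]
  rw [hk, pochhammerBinomSum, pochhammerBinomSum, mul_sum, mul_sum, ← sum_add_distrib]
  refine sum_congr rfl fun i hi => ?_
  have hchoose : ((k + 1).choose i : R) * (k + 1 - i) = k.choose i * (k + 1) := by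
    have hik : i ≤ k + 1 := by simpa [Nat.lt_succ_iff] using hi
    have h := congrArg (Nat.cast : ℕ → R) (Nat.choose_mul_succ_eq k i)
    push_cast [Nat.cast_sub hik] at h
    exact h.symm
  rw [ascPochhammer_succ_eval]
  linear_combination (ascPochhammer R d).eval (a - i) * hchoose

theorem pochhammerBinomSum_diag (m : ℕ) (a : R) :
    pochhammerBinomSum (m + 3) (m + 2) a =
      2 * a * pochhammerBinomSum (m + 2) (m + 1) a +
        (m + 2) * (m + 1) * pochhammerBinomSum (m + 1) m a := by
  have h1 := pochhammerBinomSum_succ_succ (m + 2) (m + 1) a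
  have h2 := pochhammerBinomSum_pascal (m + 2) (m + 1) a
  have h3 := pochhammerBinomSum_sub_one (m + 1) (m + 1) a
  have h4 := pochhammerBinomSum_succ_succ (m + 1) m a
  push_cast at h1 h2 h3 h4
  linear_combination h1 + a * h2 + a * h3 + (m + 2) * h4

end PochhammerBinomSum

section Nonneg

variable {R : Type*} [CommRing R] [PartialOrder R] [IsOrderedRing R]

theorem ascPochhammer_eval_X_mem_nonnegCoeffs (d : ℕ) :
    (ascPochhammer R[X] d).eval X ∈ nonnegCoeffs R := by
  rw [ascPochhammer_eval_eq_prod_range]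
  exact prod_mem fun m _ => add_mem X_mem_nonnegCoeffs (natCast_mem _ m)

theorem pochhammerBinomSum_diag_mem_nonnegCoeffs :
    ∀ m : ℕ, pochhammerBinomSum (m + 1) m (X : R[X]) ∈ nonnegCoeffs R
  | 0 => by
    rw [pochhammerBinomSum_zero_right]
    exact ascPochhammer_eval_X_mem_nonnegCoeffs 1
  | 1 => by
    have h : pochhammerBinomSum 2 1 (X : R[X]) = 2 * X * X := by
      simp only [pochhammerBinomSum, ascPochhammer_eval_eq_prod_range, sum_range_succ,
        prod_range_succ, sum_range_zero, prod_range_zero, Nat.choose_zero_right, Nat.choose_self]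
      push_cast
      ring
    rw [h]
    exact mul_mem (mul_mem (ofNat_mem _ 2) X_mem_nonnegCoeffs) X_mem_nonnegCoeffs
  | m + 2 => by
    rw [pochhammerBinomSum_diag]
    refine add_mem (mul_mem (mul_mem (ofNat_mem _ 2) X_mem_nonnegCoeffs)
      (pochhammerBinomSum_diag_mem_nonnegCoeffs (m + 1)))
      (mul_mem (mul_mem ?_ ?_) (pochhammerBinomSum_diag_mem_nonnegCoeffs m))
    · exact_mod_cast natCast_mem (nonnegCoeffs R) (m + 2)
    · exact_mod_cast natCast_mem (nonnegCoeffs R) (m + 1)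

theorem pochhammerBinomSum_mem_nonnegCoeffs {d k : ℕ} (hkd : k < d) :
    pochhammerBinomSum d k (X : R[X]) ∈ nonnegCoeffs R := by
  induction d generalizing k with
  | zero => omega
  | succ d ih =>
    rcases k with _ | k
    · rw [pochhammerBinomSum_zero_right]
      exact ascPochhammer_eval_X_mem_nonnegCoeffs _
    rcases (Nat.lt_succ_iff.mp hkd).eq_or_lt with rfl | hk
    · exact pochhammerBinomSum_diag_mem_nonnegCoeffs (k + 1)
    obtain ⟨e, rfl⟩ : ∃ e, d = k + 2 + e := ⟨d - (k + 2), by omega⟩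
    have hcoeff :
        (X : R[X]) + ((k + 2 + e : ℕ) : R[X]) - (k + 1 : R[X]) = X + ((e + 1 : ℕ) : R[X]) := by
      push_cast
      ring
    rw [pochhammerBinomSum_succ_succ, hcoeff]
    exact add_mem (mul_mem (add_mem X_mem_nonnegCoeffs (natCast_mem _ _)) (ih (by omega)))
      (mul_mem (by exact_mod_cast natCast_mem (nonnegCoeffs R) (k + 1)) (ih (by omega)))

end Nonneg

theorem Qpoly_eq_pochhammerBinomSum (d k : ℕ) :
    Qpoly d k = pochhammerBinomSum d k (X + 1 : ℤ[X]) := by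
  refine sum_congr rfl fun i _ => ?_
  rw [map_natCast, ascPochhammer_eval_eq_prod_range]
  refine congrArg _ (prod_congr rfl fun m _ => ?_)
  simp only [map_sub, map_add, map_natCast, map_one]
  ring

theorem Qpoly_succ (d k : ℕ) :
    Qpoly d (k + 1) = Qpoly d k + pochhammerBinomSum d k (X : ℤ[X]) := by
  rw [Qpoly_eq_pochhammerBinomSum, Qpoly_eq_pochhammerBinomSum, pochhammerBinomSum_pascal,
    add_sub_cancel_right]

theorem stmt13_general (d k j : ℕ) (hk : k + 1 ≤ d) :
    (Qpoly d k).coeff j ≤ (Qpoly d (k + 1)).coeff j := by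
  rw [Qpoly_succ, coeff_add]
  exact le_add_of_nonneg_right (mem_nonnegCoeffs.mp (pochhammerBinomSum_mem_nonnegCoeffs hk) j)

/-- For every `d ≥ 1`, `0 ≤ k ≤ d−1`, `0 ≤ j ≤ d`,
`c_{d,k}(j) ≤ c_{d,k+1}(j)`. -/
theorem stmt13 (d k j : ℕ) (hd : 1 ≤ d) (hk : k + 1 ≤ d) (hj : j ≤ d) :
    (Qpoly d k).coeff j ≤ (Qpoly d (k + 1)).coeff j :=
  stmt13_general d k j hk
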